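/- Let k ≥ 1 and λ > 2k be real numbers. Then there exist real numbers γ, α, s, r with γ > 1 + k, α > 0, s > 0, 0 < r < α/γ, such that β₁(α, s) > β₂(α, s) and min(r, s) > 1/λ. Consequently, the exponent min(r, s) appearing in the regularization error bound ‖u^ε − u‖_{C⁰} ≤ c ε^{min(r,s)} can be taken larger than 1/λ for any λ > 2k. -/

import Mathlib

/-- `β₁(α, s) = (2 - s + α(2 - 1/k)) / (γ(2 - 1/k) + 1/k - 1)`. -/
noncomputable def beta1 (k γ α s : ℝ) : ℝ :=
  (2 - s + α * (2 - 1 / k)) / (γ * (2 - 1 / k) + 1 / k - 1)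

/-- `β₂(α, s) = (α + k·s) / (γ - k - 1)`. -/
noncomputable def beta2 (k γ α s : ℝ) : ℝ :=
  (α + k * s) / (γ - k - 1)

/-!
Take `α = γ c`. Then `β₁ = c + A / (γ(2 - 1/k) + 1/k - 1)` and `β₂ = c + B / (γ - k - 1)` with
`A = 2 - s + c(1 - 1/k)` and `B = k s + c(k + 1)`, so for large `γ` the sign of `β₁ - β₂` is that of
`A - (2 - 1/k) B = 2(1 - k(s + c))`. Hence `β₁ > β₂` for large `γ` as soon as `s + c < 1/k`, while
`r < α/γ = c`. Both `s` and `c` can exceed `1/λ` exactly when `2/λ < 1/k`.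
-/

open Filter

lemma eventually_pos_affine {a : ℝ} (ha : 0 < a) (b : ℝ) : ∀ᶠ x in atTop, 0 < a * x + b :=
  (tendsto_atTop_add_const_right _ b (tendsto_id.const_mul_atTop ha)).eventually_gt_atTop 0

lemma beta_cross_sub {k : ℝ} (hk : k ≠ 0) (γ s c : ℝ) :
    (2 - s + γ * c * (2 - 1 / k)) * (γ - k - 1) - (γ * c + k * s) * (γ * (2 - 1 / k) + 1 / k - 1)
      = 2 * (1 - k * (s + c)) * γ
        + ((k * s + c * (k + 1)) * (1 - 1 / k) - (2 - s + c * (1 - 1 / k)) * (k + 1)) := by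
  field_simp
  ring

lemma eventually_beta2_lt_beta1 {k s c : ℝ} (hk : 1 < 2 * k) (hsc : k * (s + c) < 1) :
    ∀ᶠ γ in atTop, beta2 k γ (γ * c) s < beta1 k γ (γ * c) s := by
  have hk0 : k ≠ 0 := by rintro rfl; linarith
  have hslope : 0 < 2 - 1 / k := by
    rw [sub_pos, div_lt_iff₀ (by linarith)]
    linarith
  filter_upwards [eventually_pos_affine one_pos (-k - 1), eventually_pos_affine hslope (1 / k - 1),
    eventually_pos_affine (by linarith : 0 < 2 * (1 - k * (s + c)))
      ((k * s + c * (k + 1)) * (1 - 1 / k) - (2 - s + c * (1 - 1 / k)) * (k + 1))]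
    with γ hD2 hD1 hcross
  rw [beta1, beta2, div_lt_div_iff₀ (by linarith) (by linarith), ← sub_pos]
  linarith [beta_cross_sub hk0 γ s c]

/-- For every `k ≥ 1` and `λ > 2k` there are admissible parameters `γ > 1 + k`,
`α, s > 0`, `0 < r < α/γ` with `β₁(α, s) > β₂(α, s)` and `min(r, s) > 1/λ`; hence the
regularization error rate `ε^{min(r,s)}` can be taken with exponent larger than `1/λ`. -/
theorem exists_params_rate (k lam : ℝ) (hk : 1 ≤ k) (hlam : 2 * k < lam) :
    ∃ γ α s r : ℝ, 1 + k < γ ∧ 0 < α ∧ 0 < s ∧ 0 < r ∧ r < α / γ ∧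
      beta1 k γ α s > beta2 k γ α s ∧ 1 / lam < min r s := by
  have hk0 : 0 < 2 * k := by linarith
  obtain ⟨t, hlam_t, ht⟩ := exists_between (one_div_lt_one_div_of_lt hk0 hlam)
  obtain ⟨r, hlam_r, hrt⟩ := exists_between hlam_t
  have hlam_pos : 0 < 1 / lam := one_div_pos.mpr (by linarith)
  have hkt : k * (t + t) < 1 := by
    rw [lt_div_iff₀ hk0] at ht
    linarith
  obtain ⟨γ, hγ, hβ⟩ :=
    ((eventually_gt_atTop (1 + k)).and (eventually_beta2_lt_beta1 (by linarith) hkt)).exists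
  have hγ0 : 0 < γ := by linarith
  refine ⟨γ, γ * t, t, r, hγ, mul_pos hγ0 (by linarith), by linarith, by linarith, ?_, hβ,
    lt_min hlam_r hlam_t⟩
  rwa [mul_div_cancel_left₀ t hγ0.ne']
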